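/- arXiv:2509.11998 — 2 statements merged into one kernel-verified Lean document; each statement's English description precedes it below -/
import Mathlib

section
/- Let Γ = ℤ^I ⊕ ℤ∂ with the form ⟨α + k∂, α' + k'∂⟩ = ⟨α, α'⟩_Q + k' n_* − k n'_*, where ⟨−,−⟩_Q is the Euler form of the star quiver Q_w of a tubular weight type and δ the minimal positive imaginary root of Q_w, with w the lcm of the weights. For classes e = α + d∂ and e' = α' + d'∂ with ranks r = n_* and r' = n'_*, degrees deg_X(e) = w·d + w·r + ⟨δ, α⟩_Q and slopes μ = deg_X/rank, one has w²⟨e, e'⟩ = w·r·r'·(μ(e') − μ(e)) + ⟨w·α − r·δ, w·α' − r'·δ⟩_Q. -/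
/-! Expanding the right-hand side bilinearly, the slope term contributes
`w·r·deg(e') − w·r'·deg(e)` and the Euler form term `w²⟨α, α'⟩ − w·r'⟨α, δ⟩ − w·r⟨δ, α'⟩ + r·r'⟨δ, δ⟩`.
Since `δ` lies in the radical of the symmetrised form, `⟨α, δ⟩ = −⟨δ, α⟩` and `⟨δ, δ⟩ = 0`, so all
terms involving `δ` cancel and what remains is `w²⟨e, e'⟩`. -/

namespace LinearMap

variable {R M : Type*} [CommRing R] [AddCommGroup M] [Module R M]

theorem apply_smul_sub_smul_of_add_swap_eq_zero [NoZeroDivisors R] [CharZero R]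
    (B : M →ₗ[R] M →ₗ[R] R) {δ : M} (hδ : ∀ x, B δ x + B x δ = 0)
    (a b a' b' : R) (x x' : M) :
    B (a • x - b • δ) (a' • x' - b' • δ)
      = a * a' * B x x' + a * b' * B δ x - a' * b * B δ x' := by
  have hδδ : B δ δ = 0 := add_self_eq_zero.mp (hδ δ)
  have hxδ : B x δ = -B δ x := eq_neg_of_add_eq_zero_right (hδ x)
  simp only [map_sub, map_smul, sub_apply, smul_apply, smul_eq_mul, hδδ, hxδ]
  ring

end LinearMap

theorem tubular_euler_slope_identity_general
    (I : Type*)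
    (EQ : (I → ℤ) →ₗ[ℤ] (I → ℤ) →ₗ[ℤ] ℤ)
    (star : I) (δ : I → ℤ) (w : ℤ)
    (hrad : ∀ x, EQ δ x + EQ x δ = 0)
    (α α' : I → ℤ) (d d' : ℤ)
    (hr : α star ≠ 0) (hr' : α' star ≠ 0) :
    (w : ℚ) ^ 2 * (((EQ α α' : ℤ) : ℚ) + (d' : ℚ) * (α star : ℚ) - (d : ℚ) * (α' star : ℚ))
      = (w : ℚ) * (α star : ℚ) * (α' star : ℚ) *
          (((w * d' + w * α' star + EQ δ α' : ℤ) : ℚ) / (α' star : ℚ)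
            - ((w * d + w * α star + EQ δ α : ℤ) : ℚ) / (α star : ℚ))
        + ((EQ (w • α - (α star) • δ) (w • α' - (α' star) • δ) : ℤ) : ℚ) := by
  rw [EQ.apply_smul_sub_smul_of_add_swap_eq_zero hrad]
  have hr_ne : (α star : ℚ) ≠ 0 := Int.cast_ne_zero.mpr hr
  have hr'_ne : (α' star : ℚ) ≠ 0 := Int.cast_ne_zero.mpr hr'
  push_cast
  field_simp
  ring

/-- In the tubular Grothendieck lattice, with deg_X(α + d∂) = w·d + w·n_* + ⟨δ, α⟩_Q
and slope μ = deg_X / rank, the extended Euler form ⟨α+d∂, α'+d'∂⟩ = ⟨α,α'⟩_Q + d'·n_* − d·n'_*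
satisfies w²⟨e, e'⟩ = w·r·r'·(μ(e') − μ(e)) + ⟨w·α − r·δ, w·α' − r'·δ⟩_Q. -/
theorem tubular_euler_slope_identity
    (I : Type*) [Fintype I]
    (EQ : (I → ℤ) →ₗ[ℤ] (I → ℤ) →ₗ[ℤ] ℤ)
    (star : I) (δ : I → ℤ) (w : ℤ)
    (hδstar : δ star = w)
    (hrad : ∀ x, EQ δ x + EQ x δ = 0)
    (α α' : I → ℤ) (d d' : ℤ)
    (hr : α star ≠ 0) (hr' : α' star ≠ 0) :
    (w : ℚ) ^ 2 * (((EQ α α' : ℤ) : ℚ) + (d' : ℚ) * (α star : ℚ) - (d : ℚ) * (α' star : ℚ))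
      = (w : ℚ) * (α star : ℚ) * (α' star : ℚ) *
          (((w * d' + w * α' star + EQ δ α' : ℤ) : ℚ) / (α' star : ℚ)
            - ((w * d + w * α star + EQ δ α : ℤ) : ℚ) / (α star : ℚ))
        + ((EQ (w • α - (α star) • δ) (w • α' - (α' star) • δ) : ℤ) : ℚ) :=
  tubular_euler_slope_identity_general I EQ star δ w hrad α α' d d' hr hr'
end

section
/- Let a, b, c be matrices over ℂ and let V be a representation of the quiver Q'' obtained from an A~_r cycle with vertices k, 1, ..., r plus an extra vertex j joined to k by one arrow a: j → k, with dimension 1 at j and h at all cycle vertices, satisfying the multiplicative preprojective relations (1+aa*)(1+b_0b_0*) = q_k(1+b_r*b_r) and (1+b_ib_i*) = q_i(1+b_{i-1}*b_{i-1}) for i = 1,...,r, where q_k q_1 ⋯ q_r = 1 and all 1+b_ib_i*, 1+b_i*b_i are invertible. Then the scalar a°a, where a° = a*(1+b_0b_0*), equals 0. -/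
open Matrix

/-- In a representation of the multiplicative preprojective algebra of an Ã_r cycle
with an extra arrow a : j → k where dim is 1 at j, the relations
(1+aa*)(1+b₀b₀*) = q_k(1+b_r*b_r) and (1+bᵢbᵢ*) = qᵢ(1+b_{i−1}*b_{i−1}), together
with q_k·q₁⋯q_r = 1 and invertibility of all 1+bᵢbᵢ*, 1+bᵢ*bᵢ, force the scalar
a°a = a*(1+b₀b₀*)a to vanish. -/
theorem multiplicative_relation_scalar_vanishes
    (h r : ℕ)
    (a : Matrix (Fin h) (Fin 1) ℂ) (astar : Matrix (Fin 1) (Fin h) ℂ)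
    (b bstar : ℕ → Matrix (Fin h) (Fin h) ℂ)
    (qk : ℂ) (q : ℕ → ℂ)
    (hqk : qk ≠ 0) (hq : ∀ i, q i ≠ 0)
    (hrel0 : (1 + a * astar) * (1 + b 0 * bstar 0) = qk • (1 + bstar r * b r))
    (hreli : ∀ i : ℕ, 1 ≤ i → i ≤ r →
      (1 : Matrix (Fin h) (Fin h) ℂ) + b i * bstar i
        = q i • ((1 : Matrix (Fin h) (Fin h) ℂ) + bstar (i - 1) * b (i - 1)))
    (hprod : qk * ∏ i ∈ Finset.Icc 1 r, q i = 1)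
    (hinv : ∀ i : ℕ, i ≤ r →
      IsUnit ((1 : Matrix (Fin h) (Fin h) ℂ) + b i * bstar i) ∧
      IsUnit ((1 : Matrix (Fin h) (Fin h) ℂ) + bstar i * b i)) :
    astar * (1 + b 0 * bstar 0) * a = 0 := by
  -- t i = trace (bstar i * b i)
  set t : ℕ → ℂ := fun i => Matrix.trace (bstar i * b i) with ht
  -- inductive relation on traces
  have key : ∀ i : ℕ, i ≤ r →
      (h : ℂ) + t i = (∏ j ∈ Finset.Icc 1 i, q j) * ((h : ℂ) + t 0) := by
    intro i
    induction i with
    | zero => intro _; simp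
    | succ n ih =>
      intro hn
      have hn' : n ≤ r := Nat.le_of_succ_le hn
      have hrel := hreli (n + 1) (Nat.succ_le_succ (Nat.zero_le n)) hn
      have htr := congrArg Matrix.trace hrel
      simp only [Matrix.trace_add, Matrix.trace_smul, Matrix.trace_one,
        Nat.add_sub_cancel, smul_eq_mul] at htr
      rw [Matrix.trace_mul_comm (b (n + 1)) (bstar (n + 1))] at htr
      have : (h : ℂ) + t (n + 1) = q (n + 1) * ((h : ℂ) + t n) := by
        simpa [ht, Finset.card_fin, mul_add] using htr
      rw [this, ih hn', Finset.prod_Icc_succ_top (Nat.succ_le_succ (Nat.zero_le n))]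
      ring
  -- trace of the main relation
  have htr0 := congrArg Matrix.trace hrel0
  have hexp : Matrix.trace ((1 + a * astar) * (1 + b 0 * bstar 0))
      = (h : ℂ) + t 0 + Matrix.trace (astar * (1 + b 0 * bstar 0) * a) := by
    have h1 : Matrix.trace (astar * (1 + b 0 * bstar 0) * a)
        = Matrix.trace (a * astar * (1 + b 0 * bstar 0)) := by
      rw [Matrix.trace_mul_comm, ← Matrix.mul_assoc]
    rw [h1]
    simp only [add_mul, mul_add, mul_one, one_mul, Matrix.trace_add, Matrix.trace_one]
    rw [Matrix.trace_mul_comm (b 0) (bstar 0)]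
    simp [ht]
    ring
  rw [hexp] at htr0
  have hr' := key r le_rfl
  have hR : Matrix.trace (qk • (1 + bstar r * b r)) = (h : ℂ) + t 0 := by
    have hstep : Matrix.trace (qk • (1 + bstar r * b r)) = qk * ((h : ℂ) + t r) := by
      simp [Matrix.trace_add, Matrix.trace_smul, Matrix.trace_one, ht, mul_add]
    rw [hstep, hr', ← mul_assoc, hprod, one_mul]
  rw [hR] at htr0
  have hzero : Matrix.trace (astar * (1 + b 0 * bstar 0) * a) = 0 := by
    linear_combination htr0
  rw [Matrix.trace_fin_one] at hzero
  ext i j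
  fin_cases i; fin_cases j
  simpa using hzero
end
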